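/- arXiv:2505.09237 — 2 statements merged into one kernel-verified Lean document; each statement's English description precedes it below -/
import Mathlib

section
/- Let (A,G,α) be a C*-dynamical system with S_G(A) nonempty. If φ ∈ S_G(A) is not an extreme point of S_G(A), then there exists a nonzero vector ξ in H_φ⁰ (the orthogonal complement of ℂξ_φ in H_φ) such that u_φ(g)ξ = ξ for every g ∈ G. -/
open Filter Topology ComplexOrder

noncomputable section

/-- A (continuous) positive definite function on a group. -/
def IsPosDefFn {G : Type*} [Group G] (f : G → ℂ) : Prop :=
  ∀ (n : ℕ) (g : Fin n → G) (c : Fin n → ℂ),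
    0 ≤ ∑ i, ∑ j, (starRingEnd ℂ) (c i) * c j * f ((g i)⁻¹ * g j)

/-- The Haagerup property for a topological group: a sequence of continuous, normalized
positive definite functions vanishing at infinity converging to `1` uniformly on
compact subsets. -/
def HasHaagerupProperty (G : Type*) [Group G] [TopologicalSpace G] : Prop :=
  ∃ φ : ℕ → G → ℂ,
    (∀ n, Continuous (φ n) ∧ IsPosDefFn (φ n) ∧ φ n 1 = 1 ∧
      Tendsto (φ n) (cocompact G) (𝓝 0)) ∧
    ∀ K : Set G, IsCompact K → TendstoUniformlyOn (fun n => φ n) (fun _ => 1) atTop K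

section CstarDyn

variable {G : Type*} [Group G] [TopologicalSpace G]
variable {A : Type*} [NormedRing A] [StarRing A] [CStarRing A] [NormedAlgebra ℂ A]
  [StarModule ℂ A]

/-- A state on a unital C*-algebra, as a linear functional. -/
def IsStateLF (φ : A →ₗ[ℂ] ℂ) : Prop := φ 1 = 1 ∧ ∀ a : A, 0 ≤ φ (star a * a)

/-- A `G`-invariant state for an action `α` of `G` on `A`. -/
def IsInvariantState (α : G → A ≃⋆ₐ[ℂ] A) (φ : A →ₗ[ℂ] ℂ) : Prop :=
  IsStateLF φ ∧ ∀ (g : G) (a : A), φ (α g a) = φ a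

/-- A mixing `G`-invariant state: `φ(α_g(a) b) → φ(a)φ(b)` as `g → ∞`. -/
def IsMixingState (α : G → A ≃⋆ₐ[ℂ] A) (φ : A →ₗ[ℂ] ℂ) : Prop :=
  IsInvariantState α φ ∧
  ∀ a b : A, Tendsto (fun g : G => φ (α g a * b)) (cocompact G) (𝓝 (φ a * φ b))

/-- The set `S_G(A)` of `G`-invariant states. -/
def invariantStates (α : G → A ≃⋆ₐ[ℂ] A) : Set (A →ₗ[ℂ] ℂ) := {φ | IsInvariantState α φ}

end CstarDyn

/-!
A non-extreme invariant state `φ = t x₁ + s x₂` dominates a multiple `r ψ` of an invariant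
state `ψ ≠ φ`. By Cauchy–Schwarz, `|ψ a|² ≤ ψ(a*a) ≤ r⁻¹ ‖π a ξ‖²`, so `ψ` is a bounded functional
on the dense subspace `π(A)ξ` and, by Riesz, `ψ = ⟪η, π(·)ξ⟫` for some `η ∈ H`. Invariance of `ψ`
makes `η` a fixed vector of `u`, and `ψ ≠ φ` prevents `η` from lying in `ℂξ`; the component of `η`
orthogonal to `ξ` is the required vector.
-/

namespace IsStateLF

variable {A : Type*} [NormedRing A] [StarRing A] [NormedAlgebra ℂ A] {ψ : A →ₗ[ℂ] ℂ}

theorem im_apply_star_mul_self (h : IsStateLF ψ) (a : A) : (ψ (star a * a)).im = 0 :=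
  (Complex.nonneg_iff.mp (h.2 a)).2.symm

theorem map_star [StarModule ℂ A] (h : IsStateLF ψ) (a : A) :
    ψ (star a) = starRingEnd ℂ (ψ a) := by
  have h₁ := h.im_apply_star_mul_self (1 + a)
  have h₂ := h.im_apply_star_mul_self (1 + Complex.I • a)
  simp only [star_add, star_one, star_smul, Complex.star_def, Complex.conj_I, add_mul, mul_add,
    one_mul, mul_one, smul_mul_assoc, mul_smul_comm, map_add, map_smul, h.1, smul_eq_mul,
    Complex.add_im, Complex.mul_im, Complex.neg_re, Complex.neg_im, Complex.mul_re, Complex.I_re,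
    Complex.I_im, Complex.one_im, h.im_apply_star_mul_self a] at h₁ h₂
  apply Complex.ext <;> simp only [Complex.conj_re, Complex.conj_im] <;> linarith

theorem norm_sq_le [StarModule ℂ A] (h : IsStateLF ψ) (a : A) :
    ‖ψ a‖ ^ 2 ≤ (ψ (star a * a)).re := by
  have hpos := (Complex.nonneg_iff.mp (h.2 (a - ψ a • 1))).1
  simp only [star_sub, star_smul, star_one, Complex.star_def, sub_mul, mul_sub, smul_mul_assoc,
    mul_smul_comm, one_mul, mul_one, map_sub, map_smul, h.1, h.map_star, smul_eq_mul,
    Complex.conj_mul', Complex.mul_conj', Complex.sub_re] at hpos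
  norm_cast at hpos
  linarith

theorem eq_of_forall_eq_mul {φ : A →ₗ[ℂ] ℂ} (hψ : IsStateLF ψ) (hφ : IsStateLF φ) {c : ℂ}
    (h : ∀ a, ψ a = c * φ a) : ψ = φ := by
  have hc : c = 1 := by simpa [hψ.1, hφ.1] using (h 1).symm
  exact LinearMap.ext fun a => by rw [h, hc, one_mul]

end IsStateLF

section Domination

variable {A : Type*} [Mul A] [Star A] [AddCommMonoid A] [Module ℂ A]

theorem exists_ne_smul_le_of_not_mem_extremePoints {S : Set (A →ₗ[ℂ] ℂ)}
    (hS : ∀ ψ ∈ S, ∀ a : A, 0 ≤ ψ (star a * a)) {φ : A →ₗ[ℂ] ℂ} (hφ : φ ∈ S)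
    (hφS : φ ∉ Set.extremePoints ℝ S) :
    ∃ ψ ∈ S, ψ ≠ φ ∧ ∃ r : ℝ, 0 < r ∧ ∀ a : A, r * (ψ (star a * a)).re ≤ (φ (star a * a)).re := by
  simp only [mem_extremePoints, hφ, true_and, not_forall] at hφS
  obtain ⟨x₁, hx₁, x₂, hx₂, ⟨t, s, ht, hs, -, rfl⟩, hne⟩ := hφS
  have hre : ∀ a : A, ((t • x₁ + s • x₂) (star a * a)).re
      = t * (x₁ (star a * a)).re + s * (x₂ (star a * a)).re := fun a => by
    simp [Complex.real_smul]
  have hpos : ∀ ψ ∈ S, ∀ a : A, 0 ≤ (ψ (star a * a)).re := fun ψ hψ a =>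
    (Complex.nonneg_iff.mp (hS ψ hψ a)).1
  by_cases h₁ : x₁ = t • x₁ + s • x₂
  · refine ⟨x₂, hx₂, fun h₂ => hne ⟨h₁, h₂⟩, s, hs, fun a => ?_⟩
    nlinarith [hre a, hpos x₁ hx₁ a]
  · refine ⟨x₁, hx₁, h₁, t, ht, fun a => ?_⟩
    nlinarith [hre a, hpos x₂ hx₂ a]

end Domination

section Riesz

variable {𝕜 E H : Type*} [RCLike 𝕜] [AddCommGroup E] [Module 𝕜 E]

theorem LinearMap.exists_clm_range_apply_eq_of_norm_le {F : Type*} [NormedAddCommGroup F]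
    [NormedSpace 𝕜 F] (P : E →ₗ[𝕜] F) (ψ : E →ₗ[𝕜] 𝕜) (C : ℝ)
    (hψ : ∀ a, ‖ψ a‖ ≤ C * ‖P a‖) :
    ∃ f : LinearMap.range P →L[𝕜] 𝕜, ∀ a, f (P.rangeRestrict a) = ψ a := by
  have hker : LinearMap.ker P ≤ LinearMap.ker ψ := fun a ha => by
    simpa [LinearMap.mem_ker.mp ha] using hψ a
  let f := (LinearMap.ker P.rangeRestrict).liftQ ψ (P.ker_rangeRestrict ▸ hker) ∘ₗ
    (P.rangeRestrict.quotKerEquivOfSurjective P.surjective_rangeRestrict).symm.toLinearMap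
  have hf : ∀ a, f (P.rangeRestrict a) = ψ a := fun a => by simp [f]
  refine ⟨f.mkContinuous C fun v => ?_, hf⟩
  obtain ⟨a, rfl⟩ := P.surjective_rangeRestrict v
  simpa [hf] using hψ a

theorem exists_inner_eq_of_norm_le [NormedAddCommGroup H] [InnerProductSpace 𝕜 H]
    [CompleteSpace H] (P : E →ₗ[𝕜] H) (hP : DenseRange P) (ψ : E →ₗ[𝕜] 𝕜) (C : ℝ)
    (hψ : ∀ a, ‖ψ a‖ ≤ C * ‖P a‖) :
    ∃ η : H, ∀ a, ψ a = inner 𝕜 η (P a) := by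
  obtain ⟨f, hf⟩ := P.exists_clm_range_apply_eq_of_norm_le ψ C hψ
  let e := (LinearMap.range P).subtypeL
  have he : DenseRange e := by
    rwa [DenseRange, Submodule.coe_subtypeL, Submodule.coe_subtype, Subtype.range_coe,
      LinearMap.coe_range]
  refine ⟨(InnerProductSpace.toDual 𝕜 H).symm (f.extend e), fun a => ?_⟩
  rw [InnerProductSpace.toDual_symm_apply, ← hf a]
  exact (f.extend_eq he isometry_subtype_coe.isUniformInducing _).symm

end Riesz

theorem apply_eq_self_of_mem_unitary_of_inner_comp {𝕜 E H : Type*} [RCLike 𝕜]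
    [NormedAddCommGroup H] [InnerProductSpace 𝕜 H] [CompleteSpace H] {U : H →L[𝕜] H}
    (hU : U ∈ unitary (H →L[𝕜] H)) {v : E → H} (hv : DenseRange v) (T : E → E)
    (hUv : ∀ a, U (v a) = v (T a)) {η : H} (hη : ∀ a, inner 𝕜 η (v (T a)) = inner 𝕜 η (v a)) :
    U η = η := by
  have hstar : star U η = η := hv.eq_of_inner_left 𝕜 fun a => by
    rw [ContinuousLinearMap.star_eq_adjoint, ContinuousLinearMap.adjoint_inner_left, hUv, hη]
  calc U η = (U * star U) η := by rw [mul_apply_eq_comp, hstar]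
    _ = η := by rw [Unitary.mul_star_self_of_mem hU, one_apply_eq_self]

section GNS

variable {A H : Type*} [NormedAddCommGroup H] [InnerProductSpace ℂ H]

theorem re_apply_star_mul_self_eq_norm_sq [Semiring A] [Algebra ℂ A] [Star A]
    [CompleteSpace H] (π : A →⋆ₐ[ℂ] (H →L[ℂ] H)) {ξ : H} {φ : A →ₗ[ℂ] ℂ}
    (hGNS : ∀ a, φ a = inner ℂ ξ (π a ξ)) (a : A) :
    (φ (star a * a)).re = ‖π a ξ‖ ^ 2 := by
  rw [hGNS, map_mul, map_star, ContinuousLinearMap.star_eq_adjoint,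
    mul_apply_eq_comp, ContinuousLinearMap.adjoint_inner_right,
    inner_self_eq_norm_sq_to_K]
  norm_cast

theorem IsStateLF.norm_le_of_smul_le [NormedRing A] [StarRing A] [NormedAlgebra ℂ A]
    [StarModule ℂ A] [CompleteSpace H] {ψ φ : A →ₗ[ℂ] ℂ} (hψ : IsStateLF ψ) {r : ℝ} (hr : 0 < r)
    (hle : ∀ a, r * (ψ (star a * a)).re ≤ (φ (star a * a)).re)
    (π : A →⋆ₐ[ℂ] (H →L[ℂ] H)) {ξ : H} (hGNS : ∀ a, φ a = inner ℂ ξ (π a ξ)) (a : A) :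
    ‖ψ a‖ ≤ (√r)⁻¹ * ‖π a ξ‖ := by
  refine le_of_pow_le_pow_left₀ two_ne_zero (by positivity) ?_
  calc ‖ψ a‖ ^ 2 ≤ (ψ (star a * a)).re := hψ.norm_sq_le a
    _ ≤ r⁻¹ * ‖π a ξ‖ ^ 2 := by
      rw [le_inv_mul_iff₀ hr, ← re_apply_star_mul_self_eq_norm_sq π hGNS]
      exact hle a
    _ = ((√r)⁻¹ * ‖π a ξ‖) ^ 2 := by rw [mul_pow, inv_pow, Real.sq_sqrt hr.le]

end GNS

theorem exists_invariant_vector_of_not_ergodic_general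
    {G : Type*} {A : Type*} [NormedRing A] [StarRing A] [NormedAlgebra ℂ A] [StarModule ℂ A]
    (α : G → A ≃⋆ₐ[ℂ] A)
    (φ : A →ₗ[ℂ] ℂ) (hφ : IsInvariantState α φ)
    -- the GNS construction `(π, H, ξ, u)` associated to `(A, φ)`:
    {H : Type*} [NormedAddCommGroup H] [InnerProductSpace ℂ H] [CompleteSpace H]
    (π : A →⋆ₐ[ℂ] (H →L[ℂ] H)) (ξ : H) (hξ : ‖ξ‖ = 1)
    (hcyc : Dense ((Submodule.span ℂ (Set.range fun a : A => π a ξ) : Submodule ℂ H) : Set H))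
    (hGNS : ∀ a : A, φ a = (inner ℂ ξ (π a ξ) : ℂ))
    (u : G → (H →L[ℂ] H))
    (hu_unitary : ∀ g : G, u g ∈ unitary (H →L[ℂ] H))
    (hu_cov : ∀ (g : G) (a : A), u g (π a ξ) = π (α g a) ξ)
    (hφ_nonerg : φ ∉ Set.extremePoints ℝ (invariantStates α)) :
    ∃ ζ : H, ζ ≠ 0 ∧ (inner ℂ ξ ζ : ℂ) = 0 ∧ ∀ g : G, u g ζ = ζ := by
  obtain ⟨ψ, hψ, hψφ, r, hr, hle⟩ :=
    exists_ne_smul_le_of_not_mem_extremePoints (fun ψ hψ => hψ.1.2) hφ hφ_nonerg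
  let P : A →ₗ[ℂ] H := (ContinuousLinearMap.apply ℂ H ξ).toLinearMap ∘ₗ π.toLinearMap
  have hP : DenseRange P := by
    have hrange : (Set.range fun a : A => π a ξ) = LinearMap.range P :=
      (LinearMap.coe_range P).symm
    rwa [hrange, Submodule.span_eq, LinearMap.coe_range] at hcyc
  obtain ⟨η, hη⟩ := exists_inner_eq_of_norm_le P hP ψ _ (hψ.1.norm_le_of_smul_le hr hle π hGNS)
  have hu_ξ : ∀ g, u g ξ = ξ := fun g => by simpa using hu_cov g 1
  have hu_η : ∀ g, u g η = η := fun g =>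
    apply_eq_self_of_mem_unitary_of_inner_comp (hu_unitary g) hP (α g) (hu_cov g) fun a => by
      rw [← hη, ← hη, hψ.2]
  refine ⟨η - inner ℂ ξ η • ξ, sub_ne_zero.mpr fun hηξ => hψφ ?_, ?_, fun g => by
    rw [map_sub, map_smul, hu_η, hu_ξ]⟩
  · obtain ⟨c, hc⟩ : ∃ c : ℂ, η = c • ξ := ⟨_, hηξ⟩
    refine hψ.1.eq_of_forall_eq_mul hφ.1 (c := starRingEnd ℂ c) fun a => ?_
    rw [hη, hc, inner_smul_left, hGNS]
    rfl
  · rw [inner_sub_right, inner_smul_right, inner_self_eq_norm_sq_to_K, hξ]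
    simp

/-- **Proposition 2.3(1)**: if a `G`-invariant state `φ` is not an extreme point of
`S_G(A)`, then there is a nonzero `u_φ(G)`-invariant vector orthogonal to the GNS
cyclic vector `ξ_φ`. -/
theorem exists_invariant_vector_of_not_ergodic
    {G : Type*} [Group G] [TopologicalSpace G] [IsTopologicalGroup G]
    [LocallyCompactSpace G] [SecondCountableTopology G] [T2Space G]
    {A : Type*} [NormedRing A] [StarRing A] [CStarRing A] [NormedAlgebra ℂ A]
    [StarModule ℂ A] [CompleteSpace A] [TopologicalSpace.SeparableSpace A]
    (α : G → A ≃⋆ₐ[ℂ] A)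
    (hα_one : ∀ a : A, α 1 a = a)
    (hα_mul : ∀ (g h : G) (a : A), α (g * h) a = α g (α h a))
    (hα_cont : ∀ a : A, Continuous fun g : G => α g a)
    (φ : A →ₗ[ℂ] ℂ) (hφ : IsInvariantState α φ)
    -- the GNS construction `(π, H, ξ, u)` associated to `(A, φ)`:
    {H : Type*} [NormedAddCommGroup H] [InnerProductSpace ℂ H] [CompleteSpace H]
    (π : A →⋆ₐ[ℂ] (H →L[ℂ] H)) (ξ : H) (hξ : ‖ξ‖ = 1)
    (hcyc : Dense ((Submodule.span ℂ (Set.range fun a : A => π a ξ) : Submodule ℂ H) : Set H))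
    (hGNS : ∀ a : A, φ a = (inner ℂ ξ (π a ξ) : ℂ))
    (u : G → (H →L[ℂ] H))
    (hu_unitary : ∀ g : G, u g ∈ unitary (H →L[ℂ] H))
    (hu_mul : ∀ g h : G, u (g * h) = u g * u h)
    (hu_cov : ∀ (g : G) (a : A), u g (π a ξ) = π (α g a) ξ)
    (hφ_nonerg : φ ∉ Set.extremePoints ℝ (invariantStates α)) :
    ∃ ζ : H, ζ ≠ 0 ∧ (inner ℂ ξ ζ : ℂ) = 0 ∧ ∀ g : G, u g ζ = ζ :=
  exists_invariant_vector_of_not_ergodic_general α φ hφ π ξ hξ hcyc hGNS u hu_unitary hu_cov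
    hφ_nonerg
end
end

section
/- Let (A,G,α) be a C*-dynamical system, let (φ_n)_{n≥1} be a sequence of mixing G-invariant states on A, and let B = ⊗_{n≥1} A be the infinite minimal tensor product with the diagonal G-action β. Then the infinite product state ⊗_{n≥1}φ_n is a mixing G-invariant state on B. -/
open Filter Topology ComplexOrder

noncomputable section

/-- The elementary product `ι 0 (x 0) * ι 1 (x 1) * ⋯ * ι (N-1) (x (N-1))` representing the
elementary tensor `x 0 ⊗ x 1 ⊗ ⋯ ⊗ x (N-1) ⊗ 1 ⊗ ⋯` in an infinite tensor product realized
through embeddings `ι n` of the factors. -/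
def elemProd {A B : Type*} [NormedRing A] [StarRing A] [CStarRing A] [NormedAlgebra ℂ A]
    [StarModule ℂ A] [NormedRing B] [StarRing B] [CStarRing B] [NormedAlgebra ℂ B]
    [StarModule ℂ B] (ι : ℕ → (A →⋆ₐ[ℂ] B)) (N : ℕ) (x : ℕ → A) : B :=
  ((List.range N).map fun i => ι i (x i)).prod

open scoped NNReal

/-! On elementary tensors, `ψ (β_g (x₁ ⊗ ⋯ ⊗ x_K) * (y₁ ⊗ ⋯ ⊗ y_K)) = ∏ φᵢ (α_g xᵢ * yᵢ)`, a
finite product of mixing sequences, and invariance is factorwise as well. A positive functional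
is bounded and each `β_g` is isometric, so `b ↦ ψ (β_g a * b)` and `a ↦ ψ (β_g a * b)` are
families of linear maps bounded uniformly in `g`. For such a family the set of points where it
converges to a given continuous linear map is a closed subspace, so mixing passes from the total
set of elementary tensors to all of `B`, one variable at a time. -/

open Submodule in
theorem tendsto_of_tendsto_on_dense_span {ι 𝕜 E F : Type*} [NontriviallyNormedField 𝕜]
    [SeminormedAddCommGroup E] [NormedSpace 𝕜 E] [NormedAddCommGroup F] [NormedSpace 𝕜 F]
    {l : Filter ι} (T : ι → E →ₗ[𝕜] F) (C : ℝ) (hT : ∀ i x, ‖T i x‖ ≤ C * ‖x‖)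
    (f : E →ₗ[𝕜] F) (hf : Continuous f) {s : Set E} (hs : Dense (span 𝕜 s : Set E))
    (h : ∀ x ∈ s, Tendsto (T · x) l (𝓝 (f x))) (x : E) : Tendsto (T · x) l (𝓝 (f x)) := by
  let M : Submodule 𝕜 E :=
    { carrier := {x | Tendsto (T · x) l (𝓝 (f x))}
      add_mem' := fun {x y} hx hy => by simpa using hx.add hy
      zero_mem' := by simpa using tendsto_const_nhds
      smul_mem' := fun c x hx => by simpa using hx.const_smul c }
  have hM : IsClosed (M : Set E) :=
    (LipschitzWith.uniformEquicontinuous _ _ fun i =>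
      AddMonoidHomClass.lipschitz_of_bound (T i) C (hT i)).equicontinuous
      |>.isClosed_setOfPred_tendsto hf
  have : closure (span 𝕜 s : Set E) ⊆ M := hM.closure_subset_iff.mpr (span_le.mpr h)
  exact this (hs.closure_eq ▸ Set.mem_univ x)

theorem exists_norm_apply_le_of_map_star_mul_self_nonneg {B : Type*} [CStarAlgebra B]
    (ψ : B →ₗ[ℂ] ℂ) (hψ : ∀ b, 0 ≤ ψ (star b * b)) : ∃ C : ℝ≥0, ∀ b, ‖ψ b‖ ≤ C * ‖b‖ := by
  let _ : PartialOrder B := CStarAlgebra.spectralOrder B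
  have _ : StarOrderedRing B := CStarAlgebra.spectralOrderedRing B
  have hpos : ∀ b : B, 0 ≤ b → 0 ≤ ψ b := by
    intro b hb
    rw [StarOrderedRing.nonneg_iff] at hb
    induction hb using AddSubmonoid.closure_induction with
    | mem z hz => obtain ⟨s, rfl⟩ := hz; exact hψ s
    | zero => simp
    | add z w _ _ hz hw => rw [map_add]; exact add_nonneg hz hw
  exact (PositiveLinearMap.mk₀ ψ hpos).exists_norm_apply_le

theorem tendsto_map_mul_of_dense_span {G B : Type*} [CStarAlgebra B] {l : Filter G}
    (β : G → B ≃⋆ₐ[ℂ] B) (ψ : B →ₗ[ℂ] ℂ) (C : ℝ≥0) (hψ : ∀ b, ‖ψ b‖ ≤ C * ‖b‖) {s : Set B}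
    (hs : Dense (Submodule.span ℂ s : Set B))
    (h : ∀ a ∈ s, ∀ b ∈ s, Tendsto (fun g => ψ (β g a * b)) l (𝓝 (ψ a * ψ b))) (a b : B) :
    Tendsto (fun g => ψ (β g a * b)) l (𝓝 (ψ a * ψ b)) := by
  have hψc : Continuous ψ := AddMonoidHomClass.continuous_of_bound ψ C hψ
  have bound (g : G) (x y : B) : ‖ψ (β g x * y)‖ ≤ C * ‖x‖ * ‖y‖ := calc
    ‖ψ (β g x * y)‖ ≤ C * ‖β g x * y‖ := hψ _
    _ ≤ C * (‖x‖ * ‖y‖) := by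
      gcongr; exact (norm_mul_le _ _).trans_eq (by rw [StarAlgEquiv.norm_map])
    _ = C * ‖x‖ * ‖y‖ := (mul_assoc ..).symm
  have tendsto_of_mem_left (x : B) (hx : x ∈ s) (y : B) :
      Tendsto (fun g => ψ (β g x * y)) l (𝓝 (ψ x * ψ y)) :=
    tendsto_of_tendsto_on_dense_span (fun g => ψ ∘ₗ LinearMap.mulLeft ℂ (β g x)) (C * ‖x‖)
      (fun g => bound g x) (ψ x • ψ) (hψc.const_smul _) hs (h x hx) y
  simpa [mul_comm (ψ b)] using tendsto_of_tendsto_on_dense_span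
    (fun g => ψ ∘ₗ LinearMap.mulRight ℂ b ∘ₗ (β g).toAlgEquiv.toLinearMap) (C * ‖b‖)
    (fun g x => (bound g x b).trans_eq (mul_right_comm ..)) (ψ b • ψ) (hψc.const_smul _) hs
    (fun x hx => by simpa [mul_comm (ψ b)] using tendsto_of_mem_left x hx b) a

section ElementaryTensors

variable {A B : Type*} [NormedRing A] [StarRing A] [CStarRing A] [NormedAlgebra ℂ A]
  [StarModule ℂ A] [NormedRing B] [StarRing B] [CStarRing B] [NormedAlgebra ℂ B]
  [StarModule ℂ B] (ι : ℕ → (A →⋆ₐ[ℂ] B))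

def elementaryTensors : Set B := {b | ∃ (N : ℕ) (x : ℕ → A), b = elemProd ι N x}

theorem elemProd_succ (N : ℕ) (x : ℕ → A) :
    elemProd ι (N + 1) x = elemProd ι N x * ι N (x N) := by
  simp [elemProd, List.range_succ]

theorem elemProd_eq_of_le {N K : ℕ} (hNK : N ≤ K) (x : ℕ → A) :
    elemProd ι N x = elemProd ι K (fun i => if i < N then x i else 1) := by
  induction K, hNK using Nat.le_induction with
  | base =>
    unfold elemProd
    congr 1
    exact List.map_congr_left fun i hi => by simp [List.mem_range.mp hi]
  | succ K hK ih => simp [elemProd_succ, ih, hK.not_gt]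

theorem exists_elemProd_common_length {b₁ b₂ : B} (h₁ : b₁ ∈ elementaryTensors ι)
    (h₂ : b₂ ∈ elementaryTensors ι) :
    ∃ (K : ℕ) (x y : ℕ → A), b₁ = elemProd ι K x ∧ b₂ = elemProd ι K y := by
  obtain ⟨N, x, rfl⟩ := h₁
  obtain ⟨M, y, rfl⟩ := h₂
  exact ⟨max N M, _, _, elemProd_eq_of_le ι (le_max_left N M) x,
    elemProd_eq_of_le ι (le_max_right N M) y⟩

theorem elemProd_mul_elemProd (hcomm : ∀ m n, m ≠ n → ∀ x y : A, Commute (ι m x) (ι n y))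
    (N : ℕ) (x y : ℕ → A) : elemProd ι N x * elemProd ι N y = elemProd ι N (x * y) := by
  induction N with
  | zero => simp [elemProd]
  | succ N ih =>
    have hc : Commute (ι N (x N)) (elemProd ι N y) := Commute.list_prod_right _ _ <| by
      simp only [List.mem_map, List.mem_range]
      rintro _ ⟨i, hi, rfl⟩
      exact hcomm N i hi.ne' _ _
    simp only [elemProd_succ, Pi.mul_apply, map_mul, ← ih]
    rw [mul_assoc, ← mul_assoc (ι N (x N)), hc.eq]
    noncomm_ring

theorem map_elemProd {F : Type*} [FunLike F B B] [MonoidHomClass F B B] (e : F) (f : A → A)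
    (he : ∀ n a, e (ι n a) = ι n (f a)) (N : ℕ) (x : ℕ → A) :
    e (elemProd ι N x) = elemProd ι N (f ∘ x) := by
  induction N with
  | zero => simp [elemProd]
  | succ N ih => rw [elemProd_succ, map_mul, ih, he, elemProd_succ, Function.comp_apply]

end ElementaryTensors

section ProductState

variable {G A B : Type*} [NormedRing A] [StarRing A] [CStarRing A] [NormedAlgebra ℂ A]
  [StarModule ℂ A] [NormedRing B] [StarRing B] [CStarRing B] [NormedAlgebra ℂ B]
  [StarModule ℂ B] {α : G → A ≃⋆ₐ[ℂ] A} {β : G → B ≃⋆ₐ[ℂ] B} {ι : ℕ → (A →⋆ₐ[ℂ] B)}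
  {φs : ℕ → (A →ₗ[ℂ] ℂ)} {ψ : B →ₗ[ℂ] ℂ}

theorem productState_map_eq (hequiv : ∀ g n a, β g (ι n a) = ι n (α g a))
    (hinv : ∀ n g a, φs n (α g a) = φs n a)
    (hψprod : ∀ N x, ψ (elemProd ι N x) = ∏ i ∈ Finset.range N, φs i (x i))
    (g : G) {b : B} (hb : b ∈ elementaryTensors ι) : ψ (β g b) = ψ b := by
  obtain ⟨N, x, rfl⟩ := hb
  simp only [map_elemProd ι (β g) (α g) (hequiv g), hψprod, Function.comp_apply, hinv]

theorem tendsto_productState_map_mul {l : Filter G}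
    (hcomm : ∀ m n, m ≠ n → ∀ x y : A, Commute (ι m x) (ι n y))
    (hequiv : ∀ g n a, β g (ι n a) = ι n (α g a))
    (hmix : ∀ n a b, Tendsto (fun g => φs n (α g a * b)) l (𝓝 (φs n a * φs n b)))
    (hψprod : ∀ N x, ψ (elemProd ι N x) = ∏ i ∈ Finset.range N, φs i (x i))
    {b₁ b₂ : B} (h₁ : b₁ ∈ elementaryTensors ι) (h₂ : b₂ ∈ elementaryTensors ι) :
    Tendsto (fun g => ψ (β g b₁ * b₂)) l (𝓝 (ψ b₁ * ψ b₂)) := by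
  obtain ⟨K, x, y, rfl, rfl⟩ := exists_elemProd_common_length ι h₁ h₂
  have factorwise (g : G) : ψ (β g (elemProd ι K x) * elemProd ι K y) =
      ∏ i ∈ Finset.range K, φs i (α g (x i) * y i) := by
    rw [map_elemProd ι (β g) (α g) (hequiv g), elemProd_mul_elemProd ι hcomm, hψprod]
    rfl
  simp only [factorwise, hψprod, ← Finset.prod_mul_distrib]
  exact tendsto_finsetProd _ fun i _ => hmix i (x i) (y i)

end ProductState

theorem infinite_product_of_mixing_is_mixing_general
    {G : Type*} [Group G] [TopologicalSpace G]
    {A : Type*} [NormedRing A] [StarRing A] [CStarRing A] [NormedAlgebra ℂ A]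
    [StarModule ℂ A]
    {B : Type*} [NormedRing B] [StarRing B] [CStarRing B] [NormedAlgebra ℂ B]
    [StarModule ℂ B] [CompleteSpace B]
    (α : G → A ≃⋆ₐ[ℂ] A)
    (β : G → B ≃⋆ₐ[ℂ] B)
    (ι : ℕ → (A →⋆ₐ[ℂ] B))
    (hcomm : ∀ m n : ℕ, m ≠ n → ∀ x y : A, Commute (ι m x) (ι n y))
    (hdense : Dense
      ((Submodule.span ℂ {b : B | ∃ (N : ℕ) (x : ℕ → A), b = elemProd ι N x} :
        Submodule ℂ B) : Set B))
    (hequiv : ∀ (g : G) (n : ℕ) (a : A), β g (ι n a) = ι n (α g a))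
    (φs : ℕ → (A →ₗ[ℂ] ℂ)) (hmix : ∀ n, IsMixingState α (φs n))
    (ψ : B →ₗ[ℂ] ℂ) (hψ : IsStateLF ψ)
    (hψprod : ∀ (N : ℕ) (x : ℕ → A),
      ψ (elemProd ι N x) = ∏ i ∈ Finset.range N, φs i (x i)) :
    IsMixingState β ψ := by
  let _ : CStarAlgebra B := { ‹NormedRing B›, ‹StarRing B›, ‹CStarRing B›, ‹NormedAlgebra ℂ B›,
    ‹StarModule ℂ B›, ‹CompleteSpace B› with }
  obtain ⟨C, hC⟩ := exists_norm_apply_le_of_map_star_mul_self_nonneg ψ hψ.2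
  have hψc : Continuous ψ := AddMonoidHomClass.continuous_of_bound ψ C hC
  have hinv (g : G) : ∀ b, ψ (β g b) = ψ b := by
    have hspan : Set.EqOn (ψ ∘ₗ (β g).toAlgEquiv.toLinearMap) ψ
        (Submodule.span ℂ (elementaryTensors ι)) := LinearMap.eqOn_span' fun b hb =>
      productState_map_eq hequiv (fun n => (hmix n).1.2) hψprod g hb
    exact congrFun (Continuous.ext_on hdense (hψc.comp (StarAlgEquiv.isometry (β g)).continuous)
      hψc hspan)
  exact ⟨⟨hψ, hinv⟩, tendsto_map_mul_of_dense_span β ψ C hC hdense fun _ h₁ _ h₂ =>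
    tendsto_productState_map_mul hcomm hequiv (fun n => (hmix n).2) hψprod h₁ h₂⟩

/-- **Lemma 2.4(2)**: the infinite product state `⊗_{n≥1} φ_n` of mixing `G`-invariant
states `φ_n` on `A` is a mixing `G`-invariant state on the infinite minimal tensor
product `B = ⊗_{n≥1} A` equipped with the diagonal action `β`. The infinite tensor
product is realized through unital embeddings `ι n : A → B` with commuting ranges whose
elementary products are total in `B`. -/
theorem infinite_product_of_mixing_is_mixing
    {G : Type*} [Group G] [TopologicalSpace G] [IsTopologicalGroup G]
    [LocallyCompactSpace G] [SecondCountableTopology G] [T2Space G]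
    {A : Type*} [NormedRing A] [StarRing A] [CStarRing A] [NormedAlgebra ℂ A]
    [StarModule ℂ A] [CompleteSpace A] [TopologicalSpace.SeparableSpace A]
    {B : Type*} [NormedRing B] [StarRing B] [CStarRing B] [NormedAlgebra ℂ B]
    [StarModule ℂ B] [CompleteSpace B] [TopologicalSpace.SeparableSpace B]
    (α : G → A ≃⋆ₐ[ℂ] A)
    (hα_one : ∀ a : A, α 1 a = a)
    (hα_mul : ∀ (g h : G) (a : A), α (g * h) a = α g (α h a))
    (hα_cont : ∀ a : A, Continuous fun g : G => α g a)
    (β : G → B ≃⋆ₐ[ℂ] B)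
    (hβ_one : ∀ b : B, β 1 b = b)
    (hβ_mul : ∀ (g h : G) (b : B), β (g * h) b = β g (β h b))
    (hβ_cont : ∀ b : B, Continuous fun g : G => β g b)
    (ι : ℕ → (A →⋆ₐ[ℂ] B))
    (hcomm : ∀ m n : ℕ, m ≠ n → ∀ x y : A, Commute (ι m x) (ι n y))
    (hdense : Dense
      ((Submodule.span ℂ {b : B | ∃ (N : ℕ) (x : ℕ → A), b = elemProd ι N x} :
        Submodule ℂ B) : Set B))
    (hequiv : ∀ (g : G) (n : ℕ) (a : A), β g (ι n a) = ι n (α g a))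
    (φs : ℕ → (A →ₗ[ℂ] ℂ)) (hmix : ∀ n, IsMixingState α (φs n))
    (ψ : B →ₗ[ℂ] ℂ) (hψ : IsStateLF ψ)
    (hψprod : ∀ (N : ℕ) (x : ℕ → A),
      ψ (elemProd ι N x) = ∏ i ∈ Finset.range N, φs i (x i)) :
    IsMixingState β ψ :=
  infinite_product_of_mixing_is_mixing_general α β ι hcomm hdense hequiv φs hmix ψ hψ hψprod
end
end
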